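/- arXiv:2306.13870 — 3 statements merged into one kernel-verified Lean document; each statement's English description precedes it below -/
import Mathlib

section
/- Let (Z_n, W_n) be a sequence of random vectors on a common probability space with values in ℝ^{d1} × ℝ^{d2} converging in distribution to (Z, W), where the law of (Z, W) is absolutely continuous with respect to Lebesgue measure on ℝ^{d1+d2} and Z and W are independent. Let R_{n,1} (values in ℝ^{d1}) and R_{n,2} (values in ℝ^{d2}) be sequences of random vectors converging to 0 in probability, and let B ⊆ ℝ^{d1} and D ⊆ ℝ^{d2} be Borel sets such that the law of (Z, W) assigns probability zero to the topological boundary of B × D. If liminf_{n→∞} P(Z_n + R_{n,1} ∈ B and W_n + R_{n,2} ∈ D) > 0, then P(Z ∈ B) > 0 and, for every t ∈ ℝ^{d1}, P(Z_n ≤ t and Z_n + R_{n,1} ∈ B and W_n + R_{n,2} ∈ D) / P(Z_n + R_{n,1} ∈ B and W_n + R_{n,2} ∈ D) converges to P(Z ≤ t and Z ∈ B) / P(Z ∈ B); that is, the conditional distribution of Z_n given the event {Z_n + R_{n,1} ∈ B, W_n + R_{n,2} ∈ D} converges to the conditional distribution of Z given {Z ∈ B}. -/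
open MeasureTheory Filter Topology

open Metric Set
open scoped ENNReal NNReal

lemma vol_hyperplane {d : ℕ} (i : Fin d) (c : ℝ) : volume {x : Fin d → ℝ | x i = c} = 0 := by
  have h : {x : Fin d → ℝ | x i = c} =
      Set.pi Set.univ (fun j => if j = i then ({c} : Set ℝ) else Set.univ) := by
    ext x
    simp only [Set.mem_setOf_eq, Set.mem_pi, Set.mem_univ, forall_true_left]
    constructor
    · intro h j; split_ifs with hj
      · subst hj; simpa using h
      · trivial
    · intro h; have := h i; simpa using this
  rw [h, volume_pi_pi]
  refine Finset.prod_eq_zero (Finset.mem_univ i) ?_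
  simp

lemma le_set_closed {d : ℕ} (t : Fin d → ℝ) : IsClosed {x : Fin d → ℝ | x ≤ t} := by
  have h : {x : Fin d → ℝ | x ≤ t} = Set.pi Set.univ (fun i => Set.Iic (t i)) := by
    ext x; simp [Pi.le_def, Set.mem_pi]
  rw [h]
  exact isClosed_set_pi (fun i _ => isClosed_Iic)

lemma frontier_le_null {d : ℕ} (t : Fin d → ℝ) :
    volume (frontier {x : Fin d → ℝ | x ≤ t}) = 0 := by
  have hsub : frontier {x : Fin d → ℝ | x ≤ t} ⊆ ⋃ i, {x : Fin d → ℝ | x i = t i} := by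
    rw [(le_set_closed t).frontier_eq]
    rintro x ⟨hx1, hx2⟩
    have hop : {y : Fin d → ℝ | ∀ i, y i < t i} ⊆ interior {x : Fin d → ℝ | x ≤ t} := by
      apply interior_maximal
      · intro y hy i; exact (hy i).le
      · have h : {y : Fin d → ℝ | ∀ i, y i < t i} = Set.pi Set.univ (fun i => Set.Iio (t i)) := by
          ext y; simp [Set.mem_pi]
        rw [h]; exact isOpen_set_pi Set.finite_univ (fun i _ => isOpen_Iio)
    have h : ¬ ∀ i, x i < t i := fun h => hx2 (hop h)
    push_neg at h
    obtain ⟨i, hi⟩ := h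
    exact Set.mem_iUnion.mpr ⟨i, le_antisymm (hx1 i) hi⟩
  exact measure_mono_null hsub (measure_iUnion_null fun i => vol_hyperplane i (t i))

lemma aux_conv {Ω : Type*} [MeasurableSpace Ω] (P : Measure Ω) [IsProbabilityMeasure P]
    {d1 d2 : ℕ}
    (Zn : ℕ → Ω → (Fin d1 → ℝ)) (Wn : ℕ → Ω → (Fin d2 → ℝ))
    (Z : Ω → (Fin d1 → ℝ)) (W : Ω → (Fin d2 → ℝ))
    (Rn1 : ℕ → Ω → (Fin d1 → ℝ)) (Rn2 : ℕ → Ω → (Fin d2 → ℝ))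
    (hZn : ∀ n, Measurable (Zn n)) (hWn : ∀ n, Measurable (Wn n))
    (hZ : Measurable Z) (hW : Measurable W)
    (hconv : ∀ f : BoundedContinuousFunction ((Fin d1 → ℝ) × (Fin d2 → ℝ)) ℝ,
      Tendsto (fun n => ∫ ω, f (Zn n ω, Wn n ω) ∂P) atTop (𝓝 (∫ ω, f (Z ω, W ω) ∂P)))
    (habs : P.map (fun ω => (Z ω, W ω)) ≪
      (volume : Measure ((Fin d1 → ℝ) × (Fin d2 → ℝ))))
    (hR1 : ∀ δ : ℝ, 0 < δ → Tendsto (fun n => P {ω | δ < ‖Rn1 n ω‖}) atTop (𝓝 0))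
    (hR2 : ∀ δ : ℝ, 0 < δ → Tendsto (fun n => P {ω | δ < ‖Rn2 n ω‖}) atTop (𝓝 0))
    (B : Set (Fin d1 → ℝ)) (D : Set (Fin d2 → ℝ))
    (hfront : P.map (fun ω => (Z ω, W ω)) (frontier (B ×ˢ D)) = 0)
    (A : Set (Fin d1 → ℝ)) (hAfr : volume (frontier A) = 0) :
    Tendsto (fun n => P {ω | Zn n ω ∈ A ∧ Zn n ω + Rn1 n ω ∈ B ∧ Wn n ω + Rn2 n ω ∈ D}) atTop
      (𝓝 (P.map (fun ω => (Z ω, W ω)) ((A ∩ B) ×ˢ D))) := by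
  set μ := P.map (fun ω => (Z ω, W ω)) with hμdef
  have hpair : ∀ n, Measurable (fun ω => (Zn n ω, Wn n ω)) := fun n => (hZn n).prodMk (hWn n)
  have hZWm : Measurable (fun ω => (Z ω, W ω)) := hZ.prodMk hW
  haveI hμP : IsProbabilityMeasure μ := Measure.isProbabilityMeasure_map hZWm.aemeasurable
  haveI hνP : ∀ n, IsProbabilityMeasure (P.map (fun ω => (Zn n ω, Wn n ω))) :=
    fun n => Measure.isProbabilityMeasure_map (hpair n).aemeasurable
  set a : ℕ → ℝ≥0∞ :=
    fun n => P {ω | Zn n ω ∈ A ∧ Zn n ω + Rn1 n ω ∈ B ∧ Wn n ω + Rn2 n ω ∈ D} with ha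
  -- weak convergence as probability measures
  let νP : ℕ → ProbabilityMeasure ((Fin d1 → ℝ) × (Fin d2 → ℝ)) :=
    fun n => ⟨P.map (fun ω => (Zn n ω, Wn n ω)), hνP n⟩
  let μP : ProbabilityMeasure ((Fin d1 → ℝ) × (Fin d2 → ℝ)) := ⟨μ, hμP⟩
  have hweak : Tendsto νP atTop (𝓝 μP) := by
    rw [ProbabilityMeasure.tendsto_iff_forall_integral_tendsto]
    intro f
    have h1 : ∀ n, ∫ x, f x ∂(νP n : Measure _) = ∫ ω, f (Zn n ω, Wn n ω) ∂P := fun n =>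
      integral_map (hpair n).aemeasurable f.continuous.measurable.aestronglyMeasurable
    have h2 : ∫ x, f x ∂(μP : Measure _) = ∫ ω, f (Z ω, W ω) ∂P :=
      integral_map hZWm.aemeasurable f.continuous.measurable.aestronglyMeasurable
    simp only [h1, h2]
    exact hconv f
  have hclosed : ∀ F : Set ((Fin d1 → ℝ) × (Fin d2 → ℝ)), IsClosed F →
      (atTop.limsup fun n => P.map (fun ω => (Zn n ω, Wn n ω)) F) ≤ μ F :=
    fun F hF => ProbabilityMeasure.limsup_measure_closed_le_of_tendsto hweak hF
  have hopen : ∀ G : Set ((Fin d1 → ℝ) × (Fin d2 → ℝ)), IsOpen G →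
      μ G ≤ atTop.liminf fun n => P.map (fun ω => (Zn n ω, Wn n ω)) G :=
    fun G hG => ProbabilityMeasure.le_liminf_measure_open_of_tendsto hweak hG
  -- radii
  set δ : ℕ → ℝ := fun k => 1 / (k + 1) with hδdef
  have hδ : ∀ k, 0 < δ k := fun k => by positivity
  have hδanti : ∀ ⦃k l : ℕ⦄, k ≤ l → δ l ≤ δ k := by
    intro k l hkl
    have hc : (k : ℝ) ≤ l := Nat.cast_le.mpr hkl
    apply one_div_le_one_div_of_le
    · positivity
    · linarith
  -- closed over- and open under-approximations
  set Fk : ℕ → Set ((Fin d1 → ℝ) × (Fin d2 → ℝ)) :=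
    fun k => (closure A ∩ cthickening (δ k) B) ×ˢ cthickening (δ k) D with hFkdef
  set Uk : ℕ → Set ((Fin d1 → ℝ) × (Fin d2 → ℝ)) :=
    fun k => (interior A ∩ (cthickening (δ k) Bᶜ)ᶜ) ×ˢ (cthickening (δ k) Dᶜ)ᶜ with hUkdef
  have hFkcl : ∀ k, IsClosed (Fk k) :=
    fun k => (isClosed_closure.inter isClosed_cthickening).prod isClosed_cthickening
  have hUkop : ∀ k, IsOpen (Uk k) :=
    fun k => (isOpen_interior.inter isClosed_cthickening.isOpen_compl).prod
      isClosed_cthickening.isOpen_compl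
  have hdist : ∀ (x r : Fin d1 → ℝ), dist x (x + r) = ‖r‖ := by
    intro x r
    rw [dist_eq_norm]
    have : x - (x + r) = -r := by abel
    rw [this, norm_neg]
  have hdist2 : ∀ (x r : Fin d2 → ℝ), dist x (x + r) = ‖r‖ := by
    intro x r
    rw [dist_eq_norm]
    have : x - (x + r) = -r := by abel
    rw [this, norm_neg]
  -- upper estimate
  have hup : ∀ n k, a n ≤ P.map (fun ω => (Zn n ω, Wn n ω)) (Fk k)
      + P {ω | δ k < ‖Rn1 n ω‖} + P {ω | δ k < ‖Rn2 n ω‖} := by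
    intro n k
    have hincl : {ω | Zn n ω ∈ A ∧ Zn n ω + Rn1 n ω ∈ B ∧ Wn n ω + Rn2 n ω ∈ D} ⊆
        ((fun ω => (Zn n ω, Wn n ω)) ⁻¹' Fk k ∪ {ω | δ k < ‖Rn1 n ω‖})
          ∪ {ω | δ k < ‖Rn2 n ω‖} := by
      rintro ω ⟨h1, h2, h3⟩
      by_cases hr2 : δ k < ‖Rn2 n ω‖
      · exact Or.inr hr2
      by_cases hr1 : δ k < ‖Rn1 n ω‖
      · exact Or.inl (Or.inr hr1)
      refine Or.inl (Or.inl ?_)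
      refine ⟨⟨subset_closure h1, ?_⟩, ?_⟩
      · exact mem_cthickening_of_dist_le (Zn n ω) (Zn n ω + Rn1 n ω) (δ k) B h2
          (by rw [hdist]; exact not_lt.1 hr1)
      · exact mem_cthickening_of_dist_le (Wn n ω) (Wn n ω + Rn2 n ω) (δ k) D h3
          (by rw [hdist2]; exact not_lt.1 hr2)
    calc a n ≤ P (((fun ω => (Zn n ω, Wn n ω)) ⁻¹' Fk k ∪ {ω | δ k < ‖Rn1 n ω‖})
          ∪ {ω | δ k < ‖Rn2 n ω‖}) := measure_mono hincl
      _ ≤ P ((fun ω => (Zn n ω, Wn n ω)) ⁻¹' Fk k ∪ {ω | δ k < ‖Rn1 n ω‖})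
          + P {ω | δ k < ‖Rn2 n ω‖} := measure_union_le _ _
      _ ≤ P ((fun ω => (Zn n ω, Wn n ω)) ⁻¹' Fk k) + P {ω | δ k < ‖Rn1 n ω‖}
          + P {ω | δ k < ‖Rn2 n ω‖} := add_le_add_left (measure_union_le _ _) _
      _ = P.map (fun ω => (Zn n ω, Wn n ω)) (Fk k) + P {ω | δ k < ‖Rn1 n ω‖}
          + P {ω | δ k < ‖Rn2 n ω‖} := by
            rw [Measure.map_apply (hpair n) (hFkcl k).measurableSet]
  -- lower estimate
  have hlow : ∀ n k, P.map (fun ω => (Zn n ω, Wn n ω)) (Uk k) ≤ a n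
      + P {ω | δ k < ‖Rn1 n ω‖} + P {ω | δ k < ‖Rn2 n ω‖} := by
    intro n k
    have hincl : (fun ω => (Zn n ω, Wn n ω)) ⁻¹' Uk k ⊆
        ({ω | Zn n ω ∈ A ∧ Zn n ω + Rn1 n ω ∈ B ∧ Wn n ω + Rn2 n ω ∈ D}
          ∪ {ω | δ k < ‖Rn1 n ω‖}) ∪ {ω | δ k < ‖Rn2 n ω‖} := by
      rintro ω ⟨⟨h1, h2⟩, h3⟩
      by_cases hr2 : δ k < ‖Rn2 n ω‖
      · exact Or.inr hr2
      by_cases hr1 : δ k < ‖Rn1 n ω‖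
      · exact Or.inl (Or.inr hr1)
      refine Or.inl (Or.inl ⟨interior_subset h1, ?_, ?_⟩)
      · by_contra hc
        exact h2 (mem_cthickening_of_dist_le (Zn n ω) (Zn n ω + Rn1 n ω) (δ k) Bᶜ hc
          (by rw [hdist]; exact not_lt.1 hr1))
      · by_contra hc
        exact h3 (mem_cthickening_of_dist_le (Wn n ω) (Wn n ω + Rn2 n ω) (δ k) Dᶜ hc
          (by rw [hdist2]; exact not_lt.1 hr2))
    calc P.map (fun ω => (Zn n ω, Wn n ω)) (Uk k)
        = P ((fun ω => (Zn n ω, Wn n ω)) ⁻¹' Uk k) := by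
          rw [Measure.map_apply (hpair n) (hUkop k).measurableSet]
      _ ≤ P (({ω | Zn n ω ∈ A ∧ Zn n ω + Rn1 n ω ∈ B ∧ Wn n ω + Rn2 n ω ∈ D}
          ∪ {ω | δ k < ‖Rn1 n ω‖}) ∪ {ω | δ k < ‖Rn2 n ω‖}) := measure_mono hincl
      _ ≤ a n + P {ω | δ k < ‖Rn1 n ω‖} + P {ω | δ k < ‖Rn2 n ω‖} :=
          le_trans (measure_union_le _ _) (add_le_add_left (measure_union_le _ _) _)
  -- boundedness facts for limsup/liminf arithmetic
  have hbdd : ∀ f : ℕ → ℝ≥0∞, IsBoundedUnder (· ≤ ·) atTop f :=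
    fun f => ⟨⊤, Eventually.of_forall fun _ => le_top⟩
  have hbddge : ∀ f : ℕ → ℝ≥0∞, IsBoundedUnder (· ≥ ·) atTop f :=
    fun f => ⟨0, Eventually.of_forall fun _ => zero_le⟩
  -- limsup bound
  have h3 : ∀ k, atTop.limsup a ≤ μ (Fk k) := by
    intro k
    refine ENNReal.le_of_forall_pos_le_add fun ε hε _ => ?_
    have hε2 : (0 : ℝ≥0∞) < (ε : ℝ≥0∞) / 2 := by
      simp [ENNReal.div_pos_iff, hε.ne']
    have e1 := (hR1 (δ k) (hδ k)).eventually_lt_const hε2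
    have e2 := (hR2 (δ k) (hδ k)).eventually_lt_const hε2
    have hev : ∀ᶠ n in atTop, a n ≤ P.map (fun ω => (Zn n ω, Wn n ω)) (Fk k) + ε := by
      filter_upwards [e1, e2] with n h1 h2
      calc a n ≤ P.map (fun ω => (Zn n ω, Wn n ω)) (Fk k)
            + P {ω | δ k < ‖Rn1 n ω‖} + P {ω | δ k < ‖Rn2 n ω‖} := hup n k
        _ ≤ P.map (fun ω => (Zn n ω, Wn n ω)) (Fk k) + (ε : ℝ≥0∞) / 2 + (ε : ℝ≥0∞) / 2 :=
            add_le_add (add_le_add le_rfl h1.le) h2.le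
        _ = P.map (fun ω => (Zn n ω, Wn n ω)) (Fk k) + ε := by
            rw [add_assoc, ENNReal.add_halves]
    calc atTop.limsup a
        ≤ atTop.limsup (fun n => P.map (fun ω => (Zn n ω, Wn n ω)) (Fk k) + ε) :=
          limsup_le_limsup hev
      _ = (atTop.limsup fun n => P.map (fun ω => (Zn n ω, Wn n ω)) (Fk k)) + ε :=
          limsup_add_const atTop _ (ε : ℝ≥0∞) (hbdd _) ((hbddge _).isCoboundedUnder_le)
      _ ≤ μ (Fk k) + ε := add_le_add_left (hclosed _ (hFkcl k)) ε
  -- liminf bound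
  have h4 : ∀ k, μ (Uk k) ≤ atTop.liminf a := by
    intro k
    refine ENNReal.le_of_forall_pos_le_add fun ε hε _ => ?_
    have hε2 : (0 : ℝ≥0∞) < (ε : ℝ≥0∞) / 2 := by
      simp [ENNReal.div_pos_iff, hε.ne']
    have e1 := (hR1 (δ k) (hδ k)).eventually_lt_const hε2
    have e2 := (hR2 (δ k) (hδ k)).eventually_lt_const hε2
    have hev : ∀ᶠ n in atTop, P.map (fun ω => (Zn n ω, Wn n ω)) (Uk k) ≤ a n + ε := by
      filter_upwards [e1, e2] with n h1 h2
      calc P.map (fun ω => (Zn n ω, Wn n ω)) (Uk k)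
          ≤ a n + P {ω | δ k < ‖Rn1 n ω‖} + P {ω | δ k < ‖Rn2 n ω‖} := hlow n k
        _ ≤ a n + (ε : ℝ≥0∞) / 2 + (ε : ℝ≥0∞) / 2 :=
            add_le_add (add_le_add le_rfl h1.le) h2.le
        _ = a n + ε := by rw [add_assoc, ENNReal.add_halves]
    calc μ (Uk k) ≤ atTop.liminf (fun n => P.map (fun ω => (Zn n ω, Wn n ω)) (Uk k)) :=
          hopen _ (hUkop k)
      _ ≤ atTop.liminf (fun n => a n + ε) := liminf_le_liminf hev
      _ = atTop.liminf a + ε :=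
          liminf_add_const atTop a (ε : ℝ≥0∞) ((hbdd _).isCoboundedUnder_ge) (hbddge _)
  -- intersection and union identities
  have hclosB : closure B = ⋂ k, cthickening (δ k) B := by
    rw [closure_eq_iInter_cthickening' B (Set.range δ) ?_, Set.biInter_range]
    intro ε hε
    obtain ⟨k, hk⟩ := exists_nat_one_div_lt hε
    exact ⟨1 / (k + 1), ⟨k, by simp [hδdef]⟩, hδ k, by exact_mod_cast hk.le⟩
  have hclosD : closure D = ⋂ k, cthickening (δ k) D := by
    rw [closure_eq_iInter_cthickening' D (Set.range δ) ?_, Set.biInter_range]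
    intro ε hε
    obtain ⟨k, hk⟩ := exists_nat_one_div_lt hε
    exact ⟨1 / (k + 1), ⟨k, by simp [hδdef]⟩, hδ k, by exact_mod_cast hk.le⟩
  have hclosBc : closure Bᶜ = ⋂ k, cthickening (δ k) Bᶜ := by
    rw [closure_eq_iInter_cthickening' Bᶜ (Set.range δ) ?_, Set.biInter_range]
    intro ε hε
    obtain ⟨k, hk⟩ := exists_nat_one_div_lt hε
    exact ⟨1 / (k + 1), ⟨k, by simp [hδdef]⟩, hδ k, by exact_mod_cast hk.le⟩
  have hclosDc : closure Dᶜ = ⋂ k, cthickening (δ k) Dᶜ := by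
    rw [closure_eq_iInter_cthickening' Dᶜ (Set.range δ) ?_, Set.biInter_range]
    intro ε hε
    obtain ⟨k, hk⟩ := exists_nat_one_div_lt hε
    exact ⟨1 / (k + 1), ⟨k, by simp [hδdef]⟩, hδ k, by exact_mod_cast hk.le⟩
  have hiInter : (⋂ k, Fk k) = (closure A ∩ closure B) ×ˢ closure D := by
    rw [hclosB, hclosD]
    ext p
    simp only [hFkdef, Set.mem_iInter, Set.mem_prod, Set.mem_inter_iff, Set.mem_iInter]
    constructor
    · exact fun h => ⟨⟨(h 0).1.1, fun k => (h k).1.2⟩, fun k => (h k).2⟩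
    · exact fun h k => ⟨⟨h.1.1, h.1.2 k⟩, h.2 k⟩
  have hintB : interior B = ⋃ k, (cthickening (δ k) Bᶜ)ᶜ := by
    rw [← Set.compl_iInter, ← hclosBc, ← interior_compl, compl_compl]
  have hintD : interior D = ⋃ k, (cthickening (δ k) Dᶜ)ᶜ := by
    rw [← Set.compl_iInter, ← hclosDc, ← interior_compl, compl_compl]
  have hiUnion : (⋃ k, Uk k) = (interior A ∩ interior B) ×ˢ interior D := by
    rw [hintB, hintD]
    ext p
    simp only [hUkdef, Set.mem_iUnion, Set.mem_prod, Set.mem_inter_iff, Set.mem_iUnion]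
    constructor
    · rintro ⟨k, ⟨h1, h2⟩, h3⟩
      exact ⟨⟨h1, ⟨k, h2⟩⟩, ⟨k, h3⟩⟩
    · rintro ⟨⟨h1, k, h2⟩, l, h3⟩
      refine ⟨max k l, ⟨h1, ?_⟩, ?_⟩
      · exact fun hm => h2 (cthickening_mono (hδanti (le_max_left k l)) Bᶜ hm)
      · exact fun hm => h3 (cthickening_mono (hδanti (le_max_right k l)) Dᶜ hm)
  -- measure limits over k
  have hFkanti : Antitone Fk := by
    intro k l hkl
    exact Set.prod_mono
      (Set.inter_subset_inter le_rfl (cthickening_mono (hδanti hkl) B))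
      (cthickening_mono (hδanti hkl) D)
  have hUkmono : Monotone Uk := by
    intro k l hkl
    refine Set.prod_mono (Set.inter_subset_inter le_rfl ?_) ?_
    · exact Set.compl_subset_compl.2 (cthickening_mono (hδanti hkl) Bᶜ)
    · exact Set.compl_subset_compl.2 (cthickening_mono (hδanti hkl) Dᶜ)
  have hlim1 : Tendsto (fun k => μ (Fk k)) atTop (𝓝 (μ (⋂ k, Fk k))) :=
    tendsto_measure_iInter_atTop (fun k => (hFkcl k).measurableSet.nullMeasurableSet)
      hFkanti ⟨0, measure_ne_top _ _⟩
  have hlim2 : Tendsto (fun k => μ (Uk k)) atTop (𝓝 (μ (⋃ k, Uk k))) :=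
    tendsto_measure_iUnion_atTop hUkmono
  have hupper : atTop.limsup a ≤ μ ((closure A ∩ closure B) ×ˢ closure D) := by
    rw [← hiInter]
    exact ge_of_tendsto hlim1 (Eventually.of_forall h3)
  have hlower : μ ((interior A ∩ interior B) ×ˢ interior D) ≤ atTop.liminf a := by
    rw [← hiUnion]
    exact le_of_tendsto hlim2 (Eventually.of_forall h4)
  -- null difference
  have hdiff : μ (((closure A ∩ closure B) ×ˢ closure D)
      \ ((interior A ∩ interior B) ×ˢ interior D)) = 0 := by
    have hsub : ((closure A ∩ closure B) ×ˢ closure D)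
        \ ((interior A ∩ interior B) ×ˢ interior D) ⊆
        (frontier A ×ˢ (Set.univ : Set (Fin d2 → ℝ))) ∪ frontier (B ×ˢ D) := by
      rintro ⟨x, y⟩ ⟨⟨⟨hxA, hxB⟩, hyD⟩, hn⟩
      by_cases hxiA : x ∈ interior A
      · right
        rw [frontier_prod_eq]
        by_cases hxiB : x ∈ interior B
        · have hyiD : y ∉ interior D := fun h => hn (Set.mem_prod.mpr ⟨⟨hxiA, hxiB⟩, h⟩)
          exact Or.inl (Set.mem_prod.mpr ⟨hxB, ⟨hyD, hyiD⟩⟩)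
        · exact Or.inr (Set.mem_prod.mpr ⟨⟨hxB, hxiB⟩, hyD⟩)
      · exact Or.inl (Set.mem_prod.mpr ⟨⟨hxA, hxiA⟩, Set.mem_univ y⟩)
    refine measure_mono_null hsub (measure_union_null ?_ hfront)
    refine habs ?_
    rw [MeasureTheory.Measure.volume_eq_prod, Measure.prod_prod, hAfr, zero_mul]
  -- tie together
  have e1 : μ ((interior A ∩ interior B) ×ˢ interior D) ≤ μ ((A ∩ B) ×ˢ D) :=
    measure_mono (Set.prod_mono
      (Set.inter_subset_inter interior_subset interior_subset) interior_subset)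
  have e2 : μ ((A ∩ B) ×ˢ D) ≤ μ ((closure A ∩ closure B) ×ˢ closure D) :=
    measure_mono (Set.prod_mono
      (Set.inter_subset_inter subset_closure subset_closure) subset_closure)
  have e3 : μ ((closure A ∩ closure B) ×ˢ closure D)
      ≤ μ ((interior A ∩ interior B) ×ˢ interior D) := by
    calc μ ((closure A ∩ closure B) ×ˢ closure D)
        ≤ μ (((closure A ∩ closure B) ×ˢ closure D)
            ∩ ((interior A ∩ interior B) ×ˢ interior D))
          + μ (((closure A ∩ closure B) ×ˢ closure D)
            \ ((interior A ∩ interior B) ×ˢ interior D)) := measure_le_inter_add_diff _ _ _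
      _ = μ (((closure A ∩ closure B) ×ˢ closure D)
            ∩ ((interior A ∩ interior B) ×ˢ interior D)) := by rw [hdiff, add_zero]
      _ ≤ μ ((interior A ∩ interior B) ×ˢ interior D) := measure_mono Set.inter_subset_right
  refine tendsto_of_le_liminf_of_limsup_le ?_ ?_
  · exact le_trans (le_trans e2 e3) hlower
  · exact le_trans hupper (le_trans e3 e1)

/-- Lemma on conditional convergence in distribution: if `(Zₙ, Wₙ)` converges in
distribution to `(Z, W)` with jointly absolutely continuous law, `Z` independent of `W`,
`Rₙ,₁, Rₙ,₂ → 0` in probability, the law of `(Z, W)` charges no mass to the frontier of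
`B ×ˢ D`, and `liminf P(Zₙ + Rₙ,₁ ∈ B, Wₙ + Rₙ,₂ ∈ D) > 0`, then `P(Z ∈ B) > 0` and the
conditional distribution of `Zₙ` given `{Zₙ + Rₙ,₁ ∈ B, Wₙ + Rₙ,₂ ∈ D}` converges to the
conditional distribution of `Z` given `{Z ∈ B}`. -/
theorem statement0 {Ω : Type*} [MeasurableSpace Ω] (P : Measure Ω) [IsProbabilityMeasure P]
    {d1 d2 : ℕ}
    (Zn : ℕ → Ω → (Fin d1 → ℝ)) (Wn : ℕ → Ω → (Fin d2 → ℝ))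
    (Z : Ω → (Fin d1 → ℝ)) (W : Ω → (Fin d2 → ℝ))
    (Rn1 : ℕ → Ω → (Fin d1 → ℝ)) (Rn2 : ℕ → Ω → (Fin d2 → ℝ))
    (hZn : ∀ n, Measurable (Zn n)) (hWn : ∀ n, Measurable (Wn n))
    (hZ : Measurable Z) (hW : Measurable W)
    (hRn1 : ∀ n, Measurable (Rn1 n)) (hRn2 : ∀ n, Measurable (Rn2 n))
    (hconv : ∀ f : BoundedContinuousFunction ((Fin d1 → ℝ) × (Fin d2 → ℝ)) ℝ,
      Tendsto (fun n => ∫ ω, f (Zn n ω, Wn n ω) ∂P) atTop (𝓝 (∫ ω, f (Z ω, W ω) ∂P)))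
    (habs : P.map (fun ω => (Z ω, W ω)) ≪
      (volume : Measure ((Fin d1 → ℝ) × (Fin d2 → ℝ))))
    (hindep : ProbabilityTheory.IndepFun Z W P)
    (hR1 : ∀ δ : ℝ, 0 < δ → Tendsto (fun n => P {ω | δ < ‖Rn1 n ω‖}) atTop (𝓝 0))
    (hR2 : ∀ δ : ℝ, 0 < δ → Tendsto (fun n => P {ω | δ < ‖Rn2 n ω‖}) atTop (𝓝 0))
    (B : Set (Fin d1 → ℝ)) (D : Set (Fin d2 → ℝ))
    (hB : MeasurableSet B) (hD : MeasurableSet D)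
    (hfront : P.map (fun ω => (Z ω, W ω)) (frontier (B ×ˢ D)) = 0)
    (hliminf : 0 < Filter.liminf
      (fun n => (P {ω | Zn n ω + Rn1 n ω ∈ B ∧ Wn n ω + Rn2 n ω ∈ D}).toReal) atTop) :
    0 < (P {ω | Z ω ∈ B}).toReal ∧
    ∀ t : Fin d1 → ℝ,
      Tendsto
        (fun n =>
          (P {ω | Zn n ω ≤ t ∧ Zn n ω + Rn1 n ω ∈ B ∧ Wn n ω + Rn2 n ω ∈ D}).toReal /
          (P {ω | Zn n ω + Rn1 n ω ∈ B ∧ Wn n ω + Rn2 n ω ∈ D}).toReal)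
        atTop
        (𝓝 ((P {ω | Z ω ≤ t ∧ Z ω ∈ B}).toReal / (P {ω | Z ω ∈ B}).toReal)) := by
  have hZWm : Measurable (fun ω => (Z ω, W ω)) := hZ.prodMk hW
  -- denominator convergence
  have hden0 := aux_conv P Zn Wn Z W Rn1 Rn2 hZn hWn hZ hW hconv habs hR1 hR2 B D hfront
    Set.univ (by simp)
  have hsetden : ∀ n, {ω | Zn n ω ∈ Set.univ ∧ Zn n ω + Rn1 n ω ∈ B ∧ Wn n ω + Rn2 n ω ∈ D}
      = {ω | Zn n ω + Rn1 n ω ∈ B ∧ Wn n ω + Rn2 n ω ∈ D} := by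
    intro n; ext ω; simp
  simp only [hsetden, Set.univ_inter] at hden0
  -- value of the limit
  have hprodval : ∀ (S : Set (Fin d1 → ℝ)), MeasurableSet S →
      P.map (fun ω => (Z ω, W ω)) (S ×ˢ D) = P (Z ⁻¹' S) * P (W ⁻¹' D) := by
    intro S hS
    rw [Measure.map_apply hZWm (hS.prod hD)]
    have hpre : (fun ω => (Z ω, W ω)) ⁻¹' (S ×ˢ D) = Z ⁻¹' S ∩ W ⁻¹' D := by
      ext ω; simp
    rw [hpre]
    exact hindep.measure_inter_preimage_eq_mul S D hS hD
  have hdenval : P.map (fun ω => (Z ω, W ω)) (B ×ˢ D) = P (Z ⁻¹' B) * P (W ⁻¹' D) :=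
    hprodval B hB
  -- real-valued convergence of the denominator
  have hdenR : Tendsto (fun n => (P {ω | Zn n ω + Rn1 n ω ∈ B ∧ Wn n ω + Rn2 n ω ∈ D}).toReal)
      atTop (𝓝 ((P (Z ⁻¹' B)).toReal * (P (W ⁻¹' D)).toReal)) := by
    have h1 : Tendsto (fun n => (P {ω | Zn n ω + Rn1 n ω ∈ B ∧ Wn n ω + Rn2 n ω ∈ D}).toReal)
        atTop (𝓝 ((P.map (fun ω => (Z ω, W ω)) (B ×ˢ D)).toReal)) :=
      (ENNReal.tendsto_toReal (measure_ne_top _ _)).comp hden0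
    rwa [hdenval, ENNReal.toReal_mul] at h1
  -- positivity
  have hlimeq := hdenR.liminf_eq
  rw [hlimeq] at hliminf
  have hpq := mul_pos_iff.mp hliminf
  have hp : 0 < (P (Z ⁻¹' B)).toReal := by
    rcases hpq with ⟨h, _⟩ | ⟨h, _⟩
    · exact h
    · exact absurd h (not_lt.2 ENNReal.toReal_nonneg)
  have hq : 0 < (P (W ⁻¹' D)).toReal := by
    rcases hpq with ⟨_, h⟩ | ⟨_, h⟩
    · exact h
    · exact absurd h (not_lt.2 ENNReal.toReal_nonneg)
  have hZB : {ω | Z ω ∈ B} = Z ⁻¹' B := rfl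
  refine ⟨by rw [hZB]; exact hp, ?_⟩
  intro t
  -- numerator convergence
  set A : Set (Fin d1 → ℝ) := {x | x ≤ t} with hAdef
  have hnum0 := aux_conv P Zn Wn Z W Rn1 Rn2 hZn hWn hZ hW hconv habs hR1 hR2 B D hfront
    A (frontier_le_null t)
  have hAmeas : MeasurableSet A := (le_set_closed t).measurableSet
  have hnumval : P.map (fun ω => (Z ω, W ω)) ((A ∩ B) ×ˢ D)
      = P (Z ⁻¹' (A ∩ B)) * P (W ⁻¹' D) := hprodval (A ∩ B) (hAmeas.inter hB)
  have hsetnum : ∀ n, {ω | Zn n ω ∈ A ∧ Zn n ω + Rn1 n ω ∈ B ∧ Wn n ω + Rn2 n ω ∈ D}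
      = {ω | Zn n ω ≤ t ∧ Zn n ω + Rn1 n ω ∈ B ∧ Wn n ω + Rn2 n ω ∈ D} := fun n => rfl
  simp only [hsetnum] at hnum0
  have hnumR : Tendsto
      (fun n => (P {ω | Zn n ω ≤ t ∧ Zn n ω + Rn1 n ω ∈ B ∧ Wn n ω + Rn2 n ω ∈ D}).toReal)
      atTop (𝓝 ((P (Z ⁻¹' (A ∩ B))).toReal * (P (W ⁻¹' D)).toReal)) := by
    have h1 := (ENNReal.tendsto_toReal
      (measure_ne_top (P.map (fun ω => (Z ω, W ω))) _)).comp hnum0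
    rwa [hnumval, ENNReal.toReal_mul] at h1
  have hne : (P (Z ⁻¹' B)).toReal * (P (W ⁻¹' D)).toReal ≠ 0 := (mul_pos hp hq).ne'
  have hdiv := hnumR.div hdenR hne
  have heq : (P (Z ⁻¹' (A ∩ B))).toReal * (P (W ⁻¹' D)).toReal
      / ((P (Z ⁻¹' B)).toReal * (P (W ⁻¹' D)).toReal)
      = (P {ω | Z ω ≤ t ∧ Z ω ∈ B}).toReal / (P {ω | Z ω ∈ B}).toReal := by
    rw [mul_div_mul_right _ _ hq.ne']
    rfl
  rwa [heq] at hdiv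
end

section
/- Let (Z_n, W_n) be a sequence of random vectors on a common probability space with values in ℝ^{d1} × ℝ^{d2} converging in distribution to (Z, W), where the law of (Z, W) is absolutely continuous with respect to Lebesgue measure on ℝ^{d1+d2}. Let R_{n,1} (values in ℝ^{d1}) and R_{n,2} (values in ℝ^{d2}) be sequences of random vectors converging to 0 in probability, and let B ⊆ ℝ^{d1} and D ⊆ ℝ^{d2} be Borel sets such that the law of (Z, W) assigns probability zero to the topological boundary of B × D. Then for every t ∈ ℝ^{d1}, P(Z_n ≤ t and Z_n + R_{n,1} ∈ B and W_n + R_{n,2} ∈ D) → P(Z ≤ t and Z ∈ B and W ∈ D) as n → ∞. -/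
open MeasureTheory Filter Topology
open scoped NNReal ENNReal

section Aux

variable {Ω : Type*} {S : Type*} [MeasurableSpace Ω] [MetricSpace S] [MeasurableSpace S]
  [BorelSpace S] (P : Measure Ω) [IsProbabilityMeasure P]

lemma aux_indicator_integral {Y : Ω → S} (hY : Measurable Y) {A : Set S}
    (hA : MeasurableSet A) :
    ∫ ω, A.indicator (fun _ => (1 : ℝ)) (Y ω) ∂P = (P (Y ⁻¹' A)).toReal := by
  have h : (fun ω => A.indicator (fun _ => (1 : ℝ)) (Y ω))
      = (Y ⁻¹' A).indicator (fun _ => (1 : ℝ)) := by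
    ext ω; by_cases hω : Y ω ∈ A <;> simp [hω, Set.indicator_apply]
  rw [h, integral_indicator_const (1 : ℝ) (hA.preimage hY), smul_eq_mul, mul_one]
  rfl

lemma aux_integrable {Y : Ω → S} (hY : Measurable Y) {f : S → ℝ} (hf : Continuous f)
    (h0 : ∀ x, 0 ≤ f x) (h1 : ∀ x, f x ≤ 1) :
    Integrable (fun ω => f (Y ω)) P := by
  refine Integrable.mono' (integrable_const (1 : ℝ))
    ((hf.measurable.comp hY).aestronglyMeasurable) ?_
  refine Eventually.of_forall fun ω => ?_
  rw [Real.norm_eq_abs, abs_le]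
  exact ⟨by linarith [h0 (Y ω)], h1 (Y ω)⟩

lemma aux_dct {Y : Ω → S} (hY : Measurable Y) {A : Set S} (hA : MeasurableSet A)
    {F : ℕ → S → ℝ} (hFc : ∀ m, Continuous (F m)) (hF0 : ∀ m x, 0 ≤ F m x)
    (hF1 : ∀ m x, F m x ≤ 1)
    (hFt : ∀ x, Tendsto (fun m => F m x) atTop (𝓝 (A.indicator (fun _ => (1:ℝ)) x))) :
    Tendsto (fun m => ∫ ω, F m (Y ω) ∂P) atTop (𝓝 ((P (Y ⁻¹' A)).toReal)) := by
  rw [← aux_indicator_integral P hY hA]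
  refine tendsto_integral_of_dominated_convergence (fun _ => (1 : ℝ))
    (fun m => ((hFc m).measurable.comp hY).aestronglyMeasurable) (integrable_const 1)
    (fun m => Eventually.of_forall fun ω => ?_) (Eventually.of_forall fun ω => hFt (Y ω))
  show ‖F m (Y ω)‖ ≤ (1 : ℝ)
  rw [Real.norm_eq_abs, abs_le]
  exact ⟨by linarith [hF0 m (Y ω)], hF1 m (Y ω)⟩

lemma aux_lip_const_mul {α : Type*} [PseudoMetricSpace α] {f : α → ℝ} {K : ℝ≥0}
    (hf : LipschitzWith K f) (c : ℕ) : LipschitzWith ((c : ℝ≥0) * K) (fun x => (c : ℝ) * f x) := by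
  rw [lipschitzWith_iff_dist_le_mul] at hf ⊢
  intro x y
  rw [Real.dist_eq, ← mul_sub, abs_mul, abs_of_nonneg (by positivity : (0:ℝ) ≤ (c:ℝ))]
  calc (c : ℝ) * |f x - f y| ≤ (c : ℝ) * (K * dist x y) := by
        refine mul_le_mul_of_nonneg_left ?_ (by positivity)
        simpa [Real.dist_eq] using hf x y
    _ = ((c : ℝ≥0) * K : ℝ≥0) * dist x y := by push_cast; ring

lemma aux_bdd_ge (u : ℕ → ℝ) (h : ∀ n, 0 ≤ u n) : IsBoundedUnder (· ≥ ·) atTop u :=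
  isBoundedUnder_of ⟨0, fun n => h n⟩

lemma aux_bdd_le (u : ℕ → ℝ) {c : ℝ} (h : ∀ n, u n ≤ c) : IsBoundedUnder (· ≤ ·) atTop u :=
  isBoundedUnder_of ⟨c, h⟩

lemma aux_toReal_le_one (s : Set Ω) : (P s).toReal ≤ 1 := by
  have := measure_mono (Set.subset_univ s) (μ := P)
  rw [measure_univ] at this
  exact ENNReal.toReal_le_of_le_ofReal zero_le_one (by simpa using this)

/-- Portmanteau-type lemma, with weak convergence tested only against Lipschitz `[0,1]`-valued
functions. -/
lemma key_tendsto (X : ℕ → Ω → S) (Y : Ω → S) (hX : ∀ n, Measurable (X n)) (hY : Measurable Y)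
    (hLip : ∀ (K : ℝ≥0) (f : S → ℝ), LipschitzWith K f → (∀ x, 0 ≤ f x) → (∀ x, f x ≤ 1) →
      Tendsto (fun n => ∫ ω, f (X n ω) ∂P) atTop (𝓝 (∫ ω, f (Y ω) ∂P)))
    {E : Set S} (hE : MeasurableSet E) (hfront : P (Y ⁻¹' frontier E) = 0) :
    Tendsto (fun n => (P (X n ⁻¹' E)).toReal) atTop (𝓝 ((P (Y ⁻¹' E)).toReal)) := by
  -- liminf bound for open sets
  have hopen : ∀ G : Set S, IsOpen G →
      (P (Y ⁻¹' G)).toReal ≤ atTop.liminf (fun n => (P (X n ⁻¹' G)).toReal) := by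
    intro G hG
    by_cases hGu : G = Set.univ
    · subst hGu
      simp only [Set.preimage_univ, measure_univ, ENNReal.toReal_one]
      rw [liminf_const]
    have hGc : Gᶜ.Nonempty := Set.nonempty_compl.mpr hGu
    set F : ℕ → S → ℝ := fun m x => min 1 ((m : ℝ) * Metric.infDist x Gᶜ) with hFdef
    have hFlip : ∀ m : ℕ, LipschitzWith ((m : ℝ≥0) * 1) (F m) := fun m =>
      (aux_lip_const_mul (Metric.lipschitz_infDist_pt Gᶜ) m).const_min 1
    have hF0 : ∀ m x, 0 ≤ F m x := fun m x =>
      le_min zero_le_one (mul_nonneg (Nat.cast_nonneg m) Metric.infDist_nonneg)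
    have hF1 : ∀ m x, F m x ≤ 1 := fun m x => min_le_left _ _
    have hFle : ∀ m x, F m x ≤ G.indicator (fun _ => (1:ℝ)) x := by
      intro m x
      by_cases hx : x ∈ G
      · simpa [hx] using hF1 m x
      · have : Metric.infDist x Gᶜ = 0 := Metric.infDist_zero_of_mem hx
        simp [hFdef, hx, this]
    have hFt : ∀ x, Tendsto (fun m => F m x) atTop (𝓝 (G.indicator (fun _ => (1:ℝ)) x)) := by
      intro x
      by_cases hx : x ∈ G
      · have hd : 0 < Metric.infDist x Gᶜ :=
          ((hG.isClosed_compl).notMem_iff_infDist_pos hGc).mp (by simpa using hx)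
        have : ∀ m : ℕ, (⌈(Metric.infDist x Gᶜ)⁻¹⌉₊ ≤ m) → F m x = 1 := by
          intro m hm
          have h1 : (Metric.infDist x Gᶜ)⁻¹ ≤ (m : ℝ) :=
            le_trans (Nat.le_ceil _) (by exact_mod_cast hm)
          have h2 : (1 : ℝ) ≤ (m : ℝ) * Metric.infDist x Gᶜ := by
            rw [← inv_mul_cancel₀ hd.ne']
            exact mul_le_mul_of_nonneg_right h1 hd.le
          simp [hFdef, min_eq_left h2]
        rw [Set.indicator_of_mem hx]
        exact tendsto_atTop_of_eventually_const this
      · have h0 : Metric.infDist x Gᶜ = 0 := Metric.infDist_zero_of_mem hx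
        have heq : (fun m : ℕ => F m x) = fun _ => (0 : ℝ) := by
          funext m; simp [hFdef, h0, min_eq_right (zero_le_one (α := ℝ))]
        rw [Set.indicator_of_notMem hx, heq]
        exact tendsto_const_nhds
    have hInt : Tendsto (fun m => ∫ ω, F m (Y ω) ∂P) atTop (𝓝 ((P (Y ⁻¹' G)).toReal)) :=
      aux_dct P hY hG.measurableSet (fun m => ((hFlip m).continuous)) hF0 hF1 hFt
    refine le_of_tendsto hInt (Eventually.of_forall fun m => ?_)
    have hmono : ∀ n, ∫ ω, F m (X n ω) ∂P ≤ (P (X n ⁻¹' G)).toReal := by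
      intro n
      rw [← aux_indicator_integral P (hX n) hG.measurableSet]
      refine integral_mono (aux_integrable P (hX n) (hFlip m).continuous (hF0 m) (hF1 m)) ?_
        (fun ω => hFle m (X n ω))
      refine Integrable.mono' (integrable_const (1 : ℝ)) ?_ ?_
      · exact ((measurable_const.indicator hG.measurableSet).comp (hX n)).aestronglyMeasurable
      · exact Eventually.of_forall fun ω => by
          by_cases h : X n ω ∈ G <;> simp [h, Set.indicator_apply]
    have := (hLip _ (F m) (hFlip m) (hF0 m) (hF1 m)).liminf_eq
    rw [← this]
    refine liminf_le_liminf (Eventually.of_forall hmono) ?_ ?_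
    · exact aux_bdd_ge _ fun n => integral_nonneg fun ω => hF0 m (X n ω)
    · exact (aux_bdd_le _ fun n => aux_toReal_le_one P (X n ⁻¹' G)).isCoboundedUnder_ge
  -- limsup bound for closed sets
  have hclosed : ∀ Fc : Set S, IsClosed Fc →
      atTop.limsup (fun n => (P (X n ⁻¹' Fc)).toReal) ≤ (P (Y ⁻¹' Fc)).toReal := by
    intro Fc hFc
    by_cases hFe : Fc = ∅
    · subst hFe
      simp only [Set.preimage_empty, measure_empty, ENNReal.toReal_zero]
      rw [limsup_const]
    have hne : Fc.Nonempty := Set.nonempty_iff_ne_empty.mpr hFe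
    set F : ℕ → S → ℝ := fun m x => 1 - min 1 ((m : ℝ) * Metric.infDist x Fc) with hFdef
    have hmin_lip : ∀ m : ℕ, LipschitzWith ((m : ℝ≥0) * 1)
        (fun x => min 1 ((m : ℝ) * Metric.infDist x Fc)) := fun m =>
      (aux_lip_const_mul (Metric.lipschitz_infDist_pt Fc) m).const_min 1
    have hFlip : ∀ m : ℕ, LipschitzWith ((m : ℝ≥0) * 1) (F m) := by
      intro m
      have h := (hmin_lip m)
      rw [lipschitzWith_iff_dist_le_mul] at h ⊢
      intro x y
      have h2 := h x y
      rw [Real.dist_eq] at h2 ⊢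
      have key : F m x - F m y = (min 1 ((m : ℝ) * Metric.infDist y Fc))
          - (min 1 ((m : ℝ) * Metric.infDist x Fc)) := by
        show (1 - min 1 ((m : ℝ) * Metric.infDist x Fc))
            - (1 - min 1 ((m : ℝ) * Metric.infDist y Fc)) = _
        ring
      rw [key, abs_sub_comm]
      exact h2
    have hmin0 : ∀ (m : ℕ) x, 0 ≤ (m : ℝ) * Metric.infDist x Fc := fun m x =>
      mul_nonneg (Nat.cast_nonneg m) Metric.infDist_nonneg
    have hF0 : ∀ m x, 0 ≤ F m x := fun m x =>
      sub_nonneg.mpr (min_le_left _ _)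
    have hF1 : ∀ m x, F m x ≤ 1 := fun m x =>
      sub_le_self _ (le_min zero_le_one (hmin0 m x))
    have hFge : ∀ m x, Fc.indicator (fun _ => (1:ℝ)) x ≤ F m x := by
      intro m x
      by_cases hx : x ∈ Fc
      · have : Metric.infDist x Fc = 0 := Metric.infDist_zero_of_mem hx
        simp [hFdef, hx, this]
      · simpa [hx] using hF0 m x
    have hFt : ∀ x, Tendsto (fun m => F m x) atTop (𝓝 (Fc.indicator (fun _ => (1:ℝ)) x)) := by
      intro x
      by_cases hx : x ∈ Fc
      · have h0 : Metric.infDist x Fc = 0 := Metric.infDist_zero_of_mem hx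
        have heq : (fun m : ℕ => F m x) = fun _ => (1 : ℝ) := by
          funext m; simp [hFdef, h0, min_eq_right (zero_le_one (α := ℝ))]
        rw [Set.indicator_of_mem hx, heq]
        exact tendsto_const_nhds
      · have hd : 0 < Metric.infDist x Fc := (hFc.notMem_iff_infDist_pos hne).mp hx
        have : ∀ m : ℕ, (⌈(Metric.infDist x Fc)⁻¹⌉₊ ≤ m) → F m x = 0 := by
          intro m hm
          have h1 : (Metric.infDist x Fc)⁻¹ ≤ (m : ℝ) :=
            le_trans (Nat.le_ceil _) (by exact_mod_cast hm)
          have h2 : (1 : ℝ) ≤ (m : ℝ) * Metric.infDist x Fc := by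
            rw [← inv_mul_cancel₀ hd.ne']
            exact mul_le_mul_of_nonneg_right h1 hd.le
          simp [hFdef, min_eq_left h2]
        rw [Set.indicator_of_notMem hx]
        exact tendsto_atTop_of_eventually_const this
    have hInt : Tendsto (fun m => ∫ ω, F m (Y ω) ∂P) atTop (𝓝 ((P (Y ⁻¹' Fc)).toReal)) :=
      aux_dct P hY hFc.measurableSet (fun m => ((hFlip m).continuous)) hF0 hF1 hFt
    refine ge_of_tendsto hInt (Eventually.of_forall fun m => ?_)
    have hmono : ∀ n, (P (X n ⁻¹' Fc)).toReal ≤ ∫ ω, F m (X n ω) ∂P := by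
      intro n
      rw [← aux_indicator_integral P (hX n) hFc.measurableSet]
      refine integral_mono ?_ (aux_integrable P (hX n) (hFlip m).continuous (hF0 m) (hF1 m))
        (fun ω => hFge m (X n ω))
      refine Integrable.mono' (integrable_const (1 : ℝ)) ?_ ?_
      · exact ((measurable_const.indicator hFc.measurableSet).comp (hX n)).aestronglyMeasurable
      · exact Eventually.of_forall fun ω => by
          by_cases h : X n ω ∈ Fc <;> simp [h, Set.indicator_apply]
    have := (hLip _ (F m) (hFlip m) (hF0 m) (hF1 m)).limsup_eq
    rw [← this]
    refine limsup_le_limsup (Eventually.of_forall hmono) ?_ ?_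
    · exact (aux_bdd_ge _ fun n => ENNReal.toReal_nonneg).isCoboundedUnder_le
    · exact aux_bdd_le _ fun n =>
        le_trans (integral_mono (aux_integrable P (hX n) (hFlip m).continuous (hF0 m) (hF1 m))
          (integrable_const 1) (fun ω => hF1 m (X n ω)))
          (le_of_eq (by simp [integral_const]) : (∫ (_ : Ω), (1:ℝ) ∂P) ≤ 1)
  -- sandwich
  have hiC : P (Y ⁻¹' closure E) ≤ P (Y ⁻¹' interior E) := by
    have hsub : closure E ⊆ interior E ∪ frontier E := by
      intro x hx
      by_cases h : x ∈ interior E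
      · exact Or.inl h
      · exact Or.inr ⟨hx, h⟩
    calc P (Y ⁻¹' closure E) ≤ P (Y ⁻¹' interior E ∪ Y ⁻¹' frontier E) := by
          refine measure_mono ?_
          rw [← Set.preimage_union]
          exact Set.preimage_mono hsub
      _ ≤ P (Y ⁻¹' interior E) + P (Y ⁻¹' frontier E) := measure_union_le _ _
      _ = P (Y ⁻¹' interior E) := by rw [hfront, add_zero]
  have hIE : P (Y ⁻¹' interior E) = P (Y ⁻¹' E) :=
    le_antisymm (measure_mono (Set.preimage_mono interior_subset))
      (le_trans (measure_mono (Set.preimage_mono subset_closure)) hiC)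
  have hCE : P (Y ⁻¹' closure E) = P (Y ⁻¹' E) :=
    le_antisymm (le_trans hiC (hIE.le))
      (measure_mono (Set.preimage_mono subset_closure))
  refine tendsto_of_le_liminf_of_limsup_le ?_ ?_ ?_ ?_
  · calc (P (Y ⁻¹' E)).toReal = (P (Y ⁻¹' interior E)).toReal := by rw [hIE]
      _ ≤ atTop.liminf (fun n => (P (X n ⁻¹' interior E)).toReal) :=
          hopen _ isOpen_interior
      _ ≤ atTop.liminf (fun n => (P (X n ⁻¹' E)).toReal) := by
          refine liminf_le_liminf (Eventually.of_forall fun n =>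
            ENNReal.toReal_mono (measure_ne_top P _)
              (measure_mono (Set.preimage_mono interior_subset))) ?_ ?_
          · exact aux_bdd_ge _ fun n => ENNReal.toReal_nonneg
          · exact (aux_bdd_le _ fun n => aux_toReal_le_one P (X n ⁻¹' E)).isCoboundedUnder_ge
  · calc atTop.limsup (fun n => (P (X n ⁻¹' E)).toReal)
        ≤ atTop.limsup (fun n => (P (X n ⁻¹' closure E)).toReal) := by
          refine limsup_le_limsup (Eventually.of_forall fun n =>
            ENNReal.toReal_mono (measure_ne_top P _)
              (measure_mono (Set.preimage_mono subset_closure))) ?_ ?_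
          · exact (aux_bdd_ge _ fun n => ENNReal.toReal_nonneg).isCoboundedUnder_le
          · exact aux_bdd_le _ fun n => aux_toReal_le_one P _
      _ ≤ (P (Y ⁻¹' closure E)).toReal := hclosed _ isClosed_closure
      _ = (P (Y ⁻¹' E)).toReal := by rw [hCE]
  · exact aux_bdd_le _ fun n => aux_toReal_le_one P _
  · exact aux_bdd_ge _ fun n => ENNReal.toReal_nonneg

end Aux



/-- Under convergence in distribution of `(Zₙ, Wₙ)` to `(Z, W)` with law absolutely
continuous w.r.t. Lebesgue measure, convergence in probability of `Rₙ,₁, Rₙ,₂` to `0`, and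
null frontier of `B ×ˢ D` under the law of `(Z, W)`, we have for every `t`:
`P(Zₙ ≤ t, Zₙ + Rₙ,₁ ∈ B, Wₙ + Rₙ,₂ ∈ D) → P(Z ≤ t, Z ∈ B, W ∈ D)`. -/
theorem statement1 {Ω : Type*} [MeasurableSpace Ω] (P : Measure Ω) [IsProbabilityMeasure P]
    {d1 d2 : ℕ}
    (Zn : ℕ → Ω → (Fin d1 → ℝ)) (Wn : ℕ → Ω → (Fin d2 → ℝ))
    (Z : Ω → (Fin d1 → ℝ)) (W : Ω → (Fin d2 → ℝ))
    (Rn1 : ℕ → Ω → (Fin d1 → ℝ)) (Rn2 : ℕ → Ω → (Fin d2 → ℝ))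
    (hZn : ∀ n, Measurable (Zn n)) (hWn : ∀ n, Measurable (Wn n))
    (hZ : Measurable Z) (hW : Measurable W)
    (hRn1 : ∀ n, Measurable (Rn1 n)) (hRn2 : ∀ n, Measurable (Rn2 n))
    (hconv : ∀ f : BoundedContinuousFunction ((Fin d1 → ℝ) × (Fin d2 → ℝ)) ℝ,
      Tendsto (fun n => ∫ ω, f (Zn n ω, Wn n ω) ∂P) atTop (𝓝 (∫ ω, f (Z ω, W ω) ∂P)))
    (habs : P.map (fun ω => (Z ω, W ω)) ≪
      (volume : Measure ((Fin d1 → ℝ) × (Fin d2 → ℝ))))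
    (hR1 : ∀ δ : ℝ, 0 < δ → Tendsto (fun n => P {ω | δ < ‖Rn1 n ω‖}) atTop (𝓝 0))
    (hR2 : ∀ δ : ℝ, 0 < δ → Tendsto (fun n => P {ω | δ < ‖Rn2 n ω‖}) atTop (𝓝 0))
    (B : Set (Fin d1 → ℝ)) (D : Set (Fin d2 → ℝ))
    (hB : MeasurableSet B) (hD : MeasurableSet D)
    (hfront : P.map (fun ω => (Z ω, W ω)) (frontier (B ×ˢ D)) = 0) :
    ∀ t : Fin d1 → ℝ,
      Tendsto
        (fun n =>
          (P {ω | Zn n ω ≤ t ∧ Zn n ω + Rn1 n ω ∈ B ∧ Wn n ω + Rn2 n ω ∈ D}).toReal)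
        atTop (𝓝 ((P {ω | Z ω ≤ t ∧ Z ω ∈ B ∧ W ω ∈ D}).toReal)) := by
  intro t
  classical
  set X : ℕ → Ω → (((Fin d1 → ℝ) × (Fin d2 → ℝ)) × (Fin d1 → ℝ)) :=
    fun n ω => ((Zn n ω + Rn1 n ω, Wn n ω + Rn2 n ω), Zn n ω) with hXdef
  set Y : Ω → (((Fin d1 → ℝ) × (Fin d2 → ℝ)) × (Fin d1 → ℝ)) :=
    fun ω => ((Z ω, W ω), Z ω) with hYdef
  have hXm : ∀ n, Measurable (X n) := fun n =>
    (((hZn n).add (hRn1 n)).prodMk ((hWn n).add (hRn2 n))).prodMk (hZn n)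
  have hYm : Measurable Y := (hZ.prodMk hW).prodMk hZ
  set E : Set (((Fin d1 → ℝ) × (Fin d2 → ℝ)) × (Fin d1 → ℝ)) :=
    (B ×ˢ D) ×ˢ (Set.Iic t) with hEdef
  have hIicEq : Set.Iic t = ⋂ j, (fun z : Fin d1 → ℝ => z j) ⁻¹' Set.Iic (t j) := by
    ext z; simp [Set.mem_iInter, Pi.le_def]
  have hIicClosed : IsClosed (Set.Iic t) := by
    rw [hIicEq]
    exact isClosed_iInter fun j => isClosed_Iic.preimage (continuous_apply j)
  have hEm : MeasurableSet E := (hB.prod hD).prod hIicClosed.measurableSet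
  -- Slutsky-type hypothesis
  have hLip : ∀ (K : ℝ≥0) (f : (((Fin d1 → ℝ) × (Fin d2 → ℝ)) × (Fin d1 → ℝ)) → ℝ),
      LipschitzWith K f → (∀ x, 0 ≤ f x) → (∀ x, f x ≤ 1) →
      Tendsto (fun n => ∫ ω, f (X n ω) ∂P) atTop (𝓝 (∫ ω, f (Y ω) ∂P)) := by
    intro K f hf h0 h1
    have hcont : Continuous fun p : (Fin d1 → ℝ) × (Fin d2 → ℝ) => f (p, p.1) :=
      hf.continuous.comp (continuous_id.prodMk continuous_fst)
    set g : BoundedContinuousFunction ((Fin d1 → ℝ) × (Fin d2 → ℝ)) ℝ :=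
      BoundedContinuousFunction.ofNormedAddCommGroup (fun p => f (p, p.1)) hcont 1
        (fun p => by
          rw [Real.norm_eq_abs, abs_le]
          exact ⟨by linarith [h0 (p, p.1)], h1 _⟩) with hgdef
    have hA : Tendsto (fun n => ∫ ω, f ((Zn n ω, Wn n ω), Zn n ω) ∂P) atTop
        (𝓝 (∫ ω, f ((Z ω, W ω), Z ω) ∂P)) := by
      have h := hconv g
      simpa [hgdef] using h
    set D0 : ℕ → ℝ := fun n =>
      (∫ ω, f (X n ω) ∂P) - ∫ ω, f ((Zn n ω, Wn n ω), Zn n ω) ∂P with hD0def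
    have hYnm : ∀ n, Measurable (fun ω => ((Zn n ω, Wn n ω), Zn n ω) :
        Ω → (((Fin d1 → ℝ) × (Fin d2 → ℝ)) × (Fin d1 → ℝ))) := fun n =>
      ((hZn n).prodMk (hWn n)).prodMk (hZn n)
    have hIntX : ∀ n, Integrable (fun ω => f (X n ω)) P := fun n =>
      aux_integrable P (hXm n) hf.continuous h0 h1
    have hIntY : ∀ n, Integrable (fun ω => f ((Zn n ω, Wn n ω), Zn n ω)) P := fun n =>
      aux_integrable P (hYnm n) hf.continuous h0 h1
    have hDk : ∀ δ : ℝ, 0 < δ → ∀ n, |D0 n| ≤ (K : ℝ) * δ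
        + (2 * (P {ω | δ < ‖Rn1 n ω‖}).toReal + 2 * (P {ω | δ < ‖Rn2 n ω‖}).toReal) := by
      intro δ hδ n
      set A1 := {ω | δ < ‖Rn1 n ω‖} with hA1def
      set A2 := {ω | δ < ‖Rn2 n ω‖} with hA2def
      have hA1m : MeasurableSet A1 := measurableSet_lt measurable_const (hRn1 n).norm
      have hA2m : MeasurableSet A2 := measurableSet_lt measurable_const (hRn2 n).norm
      set bnd : Ω → ℝ := fun ω => (K : ℝ) * δ
        + (A1.indicator (fun _ => (2:ℝ)) ω + A2.indicator (fun _ => (2:ℝ)) ω) with hbnd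
      have hIb : Integrable bnd P := by
        refine (integrable_const _).add (Integrable.add ?_ ?_)
        · exact (integrable_const (2:ℝ)).indicator hA1m
        · exact (integrable_const (2:ℝ)).indicator hA2m
      have hpt : ∀ ω, ‖f (X n ω) - f ((Zn n ω, Wn n ω), Zn n ω)‖ ≤ bnd ω := by
        intro ω
        rw [Real.norm_eq_abs]
        have hKδ : 0 ≤ (K : ℝ) * δ := mul_nonneg K.coe_nonneg hδ.le
        by_cases h1ω : ω ∈ A1
        · have : |f (X n ω) - f ((Zn n ω, Wn n ω), Zn n ω)| ≤ 2 := by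
            have a1 := h0 (X n ω); have a2 := h1 (X n ω)
            have a3 := h0 ((Zn n ω, Wn n ω), Zn n ω)
            have a4 := h1 ((Zn n ω, Wn n ω), Zn n ω)
            rw [abs_le]; constructor <;> linarith
          have hi1 : A1.indicator (fun _ => (2:ℝ)) ω = 2 := Set.indicator_of_mem h1ω _
          have hi2 : 0 ≤ A2.indicator (fun _ => (2:ℝ)) ω :=
            Set.indicator_nonneg (fun _ _ => by norm_num) ω
          simp only [hbnd, hi1]; linarith
        by_cases h2ω : ω ∈ A2
        · have : |f (X n ω) - f ((Zn n ω, Wn n ω), Zn n ω)| ≤ 2 := by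
            have a1 := h0 (X n ω); have a2 := h1 (X n ω)
            have a3 := h0 ((Zn n ω, Wn n ω), Zn n ω)
            have a4 := h1 ((Zn n ω, Wn n ω), Zn n ω)
            rw [abs_le]; constructor <;> linarith
          have hi2 : A2.indicator (fun _ => (2:ℝ)) ω = 2 := Set.indicator_of_mem h2ω _
          have hi1 : 0 ≤ A1.indicator (fun _ => (2:ℝ)) ω :=
            Set.indicator_nonneg (fun _ _ => by norm_num) ω
          simp only [hbnd, hi2]; linarith
        · have hr1 : ‖Rn1 n ω‖ ≤ δ := not_lt.mp h1ω
          have hr2 : ‖Rn2 n ω‖ ≤ δ := not_lt.mp h2ω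
          have hd1 : dist (Zn n ω + Rn1 n ω) (Zn n ω) = ‖Rn1 n ω‖ := by
            rw [add_comm]; exact dist_add_self_left _ _
          have hd2 : dist (Wn n ω + Rn2 n ω) (Wn n ω) = ‖Rn2 n ω‖ := by
            rw [add_comm]; exact dist_add_self_left _ _
          have hdist : dist (X n ω) (((Zn n ω, Wn n ω), Zn n ω)) ≤ δ := by
            rw [hXdef]
            dsimp only
            rw [Prod.dist_eq, Prod.dist_eq, hd1, hd2, dist_self]
            exact max_le (max_le hr1 hr2) hδ.le
          have hlip := hf.dist_le_mul (X n ω) (((Zn n ω, Wn n ω), Zn n ω))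
          rw [Real.dist_eq] at hlip
          have : |f (X n ω) - f ((Zn n ω, Wn n ω), Zn n ω)| ≤ (K : ℝ) * δ :=
            le_trans hlip (mul_le_mul_of_nonneg_left hdist K.coe_nonneg)
          have hi1 : A1.indicator (fun _ => (2:ℝ)) ω = 0 := Set.indicator_of_notMem h1ω _
          have hi2 : A2.indicator (fun _ => (2:ℝ)) ω = 0 := Set.indicator_of_notMem h2ω _
          simp only [hbnd, hi1, hi2]; linarith
      have hIbnd : ∫ ω, bnd ω ∂P = (K : ℝ) * δ
          + (2 * (P A1).toReal + 2 * (P A2).toReal) := by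
        simp only [hbnd]
        rw [integral_add, integral_add, integral_indicator_const _ hA1m,
          integral_indicator_const _ hA2m, integral_const]
        · simp [measure_univ, mul_comm, Measure.real]
        · exact (integrable_const (2:ℝ)).indicator hA1m
        · exact (integrable_const (2:ℝ)).indicator hA2m
        · exact integrable_const _
        · exact ((integrable_const (2:ℝ)).indicator hA1m).add
            ((integrable_const (2:ℝ)).indicator hA2m)
      calc |D0 n| = ‖∫ ω, (f (X n ω) - f ((Zn n ω, Wn n ω), Zn n ω)) ∂P‖ := by
            rw [hD0def, Real.norm_eq_abs]
            rw [integral_sub (hIntX n) (hIntY n)]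
        _ ≤ ∫ ω, ‖f (X n ω) - f ((Zn n ω, Wn n ω), Zn n ω)‖ ∂P :=
            norm_integral_le_integral_norm _
        _ ≤ ∫ ω, bnd ω ∂P :=
            integral_mono ((hIntX n).sub (hIntY n)).norm hIb hpt
        _ = _ := hIbnd
    have hDto : Tendsto D0 atTop (𝓝 0) := by
      rw [NormedAddCommGroup.tendsto_nhds_zero]
      intro ε hε
      set δ : ℝ := ε / (2 * ((K : ℝ) + 1)) with hδdef
      have hδ : 0 < δ := by rw [hδdef]; positivity
      have hKδ : (K : ℝ) * δ < ε / 2 := by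
        rw [hδdef]
        rw [show (K : ℝ) * (ε / (2 * ((K : ℝ) + 1))) = ((K : ℝ) * ε) / (2 * ((K : ℝ) + 1)) by ring]
        have h2 : (K : ℝ) * ε < (2 * ((K : ℝ) + 1)) * (ε / 2) := by
          have := K.coe_nonneg; nlinarith
        rw [div_lt_iff₀ (by positivity)]
        linarith
      have ht1 : Tendsto (fun n => (P {ω | δ < ‖Rn1 n ω‖}).toReal) atTop (𝓝 0) := by
        have := (ENNReal.tendsto_toReal (by norm_num : (0:ℝ≥0∞) ≠ ⊤)).comp (hR1 δ hδ)
        simpa [Function.comp_def] using this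
      have ht2 : Tendsto (fun n => (P {ω | δ < ‖Rn2 n ω‖}).toReal) atTop (𝓝 0) := by
        have := (ENNReal.tendsto_toReal (by norm_num : (0:ℝ≥0∞) ≠ ⊤)).comp (hR2 δ hδ)
        simpa [Function.comp_def] using this
      have hsum : Tendsto (fun n => 2 * (P {ω | δ < ‖Rn1 n ω‖}).toReal
          + 2 * (P {ω | δ < ‖Rn2 n ω‖}).toReal) atTop (𝓝 0) := by
        have := (ht1.const_mul 2).add (ht2.const_mul 2)
        simpa using this
      have hev := hsum.eventually_lt_const (show (0:ℝ) < ε - (K : ℝ) * δ by linarith)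
      filter_upwards [hev] with n hn
      have := hDk δ hδ n
      rw [Real.norm_eq_abs]
      linarith
    have heq : (fun n => ∫ ω, f (X n ω) ∂P)
        = fun n => D0 n + ∫ ω, f ((Zn n ω, Wn n ω), Zn n ω) ∂P := by
      funext n; rw [hD0def]; ring
    rw [heq, hYdef]
    simpa using hDto.add hA
  -- null frontier
  have hfront' : P (Y ⁻¹' frontier E) = 0 := by
    have hsub : frontier E ⊆
        Set.univ ×ˢ frontier (Set.Iic t) ∪ (frontier (B ×ˢ D)) ×ˢ Set.univ := by
      rw [hEdef, frontier_prod_eq]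
      refine Set.union_subset ?_ ?_
      · exact (Set.prod_mono (Set.subset_univ _) subset_rfl).trans Set.subset_union_left
      · exact (Set.prod_mono subset_rfl (Set.subset_univ _)).trans Set.subset_union_right
    have hb1 : P (Y ⁻¹' (Set.univ ×ˢ frontier (Set.Iic t))) = 0 := by
      have hpre : Y ⁻¹' (Set.univ ×ˢ frontier (Set.Iic t)) = Z ⁻¹' frontier (Set.Iic t) := by
        ext ω; simp [hYdef]
      rw [hpre]
      have hfsub : frontier (Set.Iic t) ⊆ ⋃ j, {z : Fin d1 → ℝ | z j = t j} := by
        intro z hz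
        have hz1 : z ∈ Set.Iic t := by
          have := hz.1
          rwa [hIicClosed.closure_eq] at this
        have hUopen : IsOpen (⋂ j, (fun z : Fin d1 → ℝ => z j) ⁻¹' Set.Iio (t j)) :=
          isOpen_iInter_of_finite fun j => isOpen_Iio.preimage (continuous_apply j)
        have hUsub : (⋂ j, (fun z : Fin d1 → ℝ => z j) ⁻¹' Set.Iio (t j)) ⊆ Set.Iic t := by
          intro z hz
          rw [Set.mem_iInter] at hz
          intro j
          exact (hz j).le
        have hz3 : z ∉ ⋂ j, (fun z : Fin d1 → ℝ => z j) ⁻¹' Set.Iio (t j) :=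
          fun h => hz.2 (interior_maximal hUsub hUopen h)
        rw [Set.mem_iInter] at hz3
        push_neg at hz3
        obtain ⟨j, hj⟩ := hz3
        exact Set.mem_iUnion.mpr ⟨j, le_antisymm (hz1 j) (not_lt.mp (by simpa using hj))⟩
      refine measure_mono_null (Set.preimage_mono hfsub) ?_
      rw [Set.preimage_iUnion]
      refine measure_iUnion_null fun j => ?_
      have hmble : MeasurableSet {p : (Fin d1 → ℝ) × (Fin d2 → ℝ) | p.1 j = t j} := by
        have heq : {p : (Fin d1 → ℝ) × (Fin d2 → ℝ) | p.1 j = t j}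
            = (fun p : (Fin d1 → ℝ) × (Fin d2 → ℝ) => p.1 j) ⁻¹' {t j} := rfl
        rw [heq]
        exact ((measurable_pi_apply j).comp measurable_fst) (measurableSet_singleton (t j))
      have hset : Z ⁻¹' {z : Fin d1 → ℝ | z j = t j}
          = (fun ω => (Z ω, W ω)) ⁻¹' {p : (Fin d1 → ℝ) × (Fin d2 → ℝ) | p.1 j = t j} := by
        ext ω; simp
      rw [hset, ← Measure.map_apply (hZ.prodMk hW) hmble]
      apply habs
      have hprod : {p : (Fin d1 → ℝ) × (Fin d2 → ℝ) | p.1 j = t j}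
          = {z : Fin d1 → ℝ | z j = t j} ×ˢ (Set.univ : Set (Fin d2 → ℝ)) := by
        ext p; simp [Set.mem_prod]
      rw [hprod, Measure.volume_eq_prod, Measure.prod_prod]
      have hz0 : (volume : Measure (Fin d1 → ℝ)) {z : Fin d1 → ℝ | z j = t j} = 0 := by
        rw [volume_pi]
        exact Measure.pi_hyperplane (fun _ => (volume : Measure ℝ)) j (t j)
      rw [hz0, zero_mul]
    have hb2 : P (Y ⁻¹' ((frontier (B ×ˢ D)) ×ˢ Set.univ)) = 0 := by
      have hpre : Y ⁻¹' ((frontier (B ×ˢ D)) ×ˢ Set.univ)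
          = (fun ω => (Z ω, W ω)) ⁻¹' frontier (B ×ˢ D) := by
        ext ω; simp [hYdef]
      rw [hpre, ← Measure.map_apply (hZ.prodMk hW) isClosed_frontier.measurableSet]
      exact hfront
    refine measure_mono_null (Set.preimage_mono hsub) ?_
    rw [Set.preimage_union]
    exact measure_union_null hb1 hb2
  have key := key_tendsto P X Y hXm hYm hLip hEm hfront'
  have hXE : ∀ n, X n ⁻¹' E
      = {ω | Zn n ω ≤ t ∧ Zn n ω + Rn1 n ω ∈ B ∧ Wn n ω + Rn2 n ω ∈ D} := by
    intro n
    ext ω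
    simp only [hXdef, hEdef, Set.mem_preimage, Set.mem_prod, Set.mem_Iic, Set.mem_setOf_eq]
    tauto
  have hYE : Y ⁻¹' E = {ω | Z ω ≤ t ∧ Z ω ∈ B ∧ W ω ∈ D} := by
    ext ω
    simp only [hYdef, hEdef, Set.mem_preimage, Set.mem_prod, Set.mem_Iic, Set.mem_setOf_eq]
    tauto
  simp only [hXE, hYE] at key
  exact key
end

section
/- Let σ > 0 and u < v be fixed real numbers and let x ∈ (u, v). Then the map θ ↦ F^{u,v}_{θ,σ²}(x) is strictly decreasing on ℝ. Consequently, for any α ∈ (0,1), each of the equations F^{u,v}_{θ,σ²}(x) = 1 − α/2 and F^{u,v}_{θ,σ²}(x) = α/2 has at most one solution in θ. -/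
open MeasureTheory

/-- The standard normal cumulative distribution function `Φ`. -/
noncomputable def stdNormalCDF (x : ℝ) : ℝ :=
  (ProbabilityTheory.gaussianReal 0 1 (Set.Iic x)).toReal

/-- The CDF `F^{u,v}_{θ,σ²}` of the Gaussian `N(θ, σ²)` truncated to `[u, v]`. -/
noncomputable def truncGaussCDF (θ σ u v x : ℝ) : ℝ :=
  (stdNormalCDF ((x - θ) / σ) - stdNormalCDF ((u - θ) / σ)) /
    (stdNormalCDF ((v - θ) / σ) - stdNormalCDF ((u - θ) / σ))

noncomputable def stdPhi (t : ℝ) : ℝ := (Real.sqrt (2 * Real.pi))⁻¹ * Real.exp (-t ^ 2 / 2)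

lemma gaussianPDFReal_eq_stdPhi (t : ℝ) :
    ProbabilityTheory.gaussianPDFReal 0 1 t = stdPhi t := by
  simp [ProbabilityTheory.gaussianPDFReal, stdPhi]

lemma stdPhi_pos (t : ℝ) : 0 < stdPhi t := by
  have h1 : 0 < Real.sqrt (2 * Real.pi) := Real.sqrt_pos.2 (by positivity)
  exact mul_pos (inv_pos.2 h1) (Real.exp_pos _)

lemma continuous_stdPhi : Continuous stdPhi := by
  unfold stdPhi
  fun_prop

lemma cont_id_mul_stdPhi : Continuous fun t : ℝ => t * stdPhi t :=
  continuous_id.mul continuous_stdPhi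

lemma cont_const_mul_stdPhi (a : ℝ) : Continuous fun t : ℝ => a * stdPhi t :=
  continuous_const.mul continuous_stdPhi

lemma cont_sub_mul_stdPhi (a : ℝ) : Continuous fun t : ℝ => (a - t) * stdPhi t :=
  (continuous_const.sub continuous_id).mul continuous_stdPhi

lemma hasDerivAt_stdPhi (t : ℝ) : HasDerivAt stdPhi (-t * stdPhi t) t := by
  have h1 : HasDerivAt (fun s : ℝ => -s ^ 2 / 2) (-t) t := by
    have := ((hasDerivAt_pow 2 t).neg).div_const 2
    convert this using 1
    · rfl
    · rfl
    · rfl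
    push_cast
    ring
  have h2 : HasDerivAt (fun s : ℝ => Real.exp (-s ^ 2 / 2))
      (Real.exp (-t ^ 2 / 2) * (-t)) t := (Real.hasDerivAt_exp _).comp t h1
  have h3 := h2.const_mul (Real.sqrt (2 * Real.pi))⁻¹
  convert h3 using 1
  · rfl
  · rfl
  · rfl
  simp [stdPhi]; ring

lemma stdNormalCDF_eq (x : ℝ) : stdNormalCDF x = ∫ t in Set.Iic x, stdPhi t := by
  rw [stdNormalCDF, ProbabilityTheory.gaussianReal_apply_eq_integral 0 one_ne_zero,
    ENNReal.toReal_ofReal]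
  · simp_rw [gaussianPDFReal_eq_stdPhi]
  · exact integral_nonneg fun t => (ProbabilityTheory.gaussianPDFReal_nonneg 0 1 t)

lemma integrable_stdPhi : Integrable stdPhi := by
  have := ProbabilityTheory.integrable_gaussianPDFReal 0 1
  simpa [funext gaussianPDFReal_eq_stdPhi] using this

set_option maxHeartbeats 1000000 in
lemma stdNormalCDF_sub (r s : ℝ) :
    stdNormalCDF s - stdNormalCDF r = ∫ t in r..s, stdPhi t := by
  rw [stdNormalCDF_eq, stdNormalCDF_eq]
  exact intervalIntegral.integral_Iic_sub_Iic
    integrable_stdPhi.integrableOn integrable_stdPhi.integrableOn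

lemma hasDerivAt_stdNormalCDF (x : ℝ) : HasDerivAt stdNormalCDF (stdPhi x) x := by
  have h : stdNormalCDF = fun y => stdNormalCDF 0 + ∫ t in (0:ℝ)..y, stdPhi t := by
    funext y
    rw [← stdNormalCDF_sub]; ring
  rw [h]
  exact ((continuous_stdPhi.integral_hasStrictDerivAt 0 x).hasDerivAt).const_add _

lemma integral_id_mul_stdPhi (r s : ℝ) :
    ∫ t in r..s, t * stdPhi t = stdPhi r - stdPhi s := by
  have h : ∀ t ∈ Set.uIcc r s, HasDerivAt (fun z => -stdPhi z) (t * stdPhi t) t := by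
    intro t _
    convert (hasDerivAt_stdPhi t).neg using 1
    · rfl
    · rfl
    · rfl
    ring
  rw [intervalIntegral.integral_eq_sub_of_hasDerivAt h (cont_id_mul_stdPhi.intervalIntegrable r s)]
  ring

lemma integral_stdPhi_pos {r s : ℝ} (h : r < s) : 0 < ∫ t in r..s, stdPhi t :=
  intervalIntegral.intervalIntegral_pos_of_pos
    (continuous_stdPhi.intervalIntegrable r s) stdPhi_pos h

/-- the key determinant inequality -/
lemma key_pos {c a b : ℝ} (hca : c < a) (hab : a < b) :
    0 < (stdPhi a - stdPhi c) * (∫ t in c..b, stdPhi t)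
      - (∫ t in c..a, stdPhi t) * (stdPhi b - stdPhi c) := by
  set N := ∫ t in c..a, stdPhi t with hN
  set M := ∫ t in a..b, stdPhi t with hM
  have hNpos : 0 < N := integral_stdPhi_pos hca
  have hMpos : 0 < M := integral_stdPhi_pos hab
  have hD : (∫ t in c..b, stdPhi t) = N + M :=
    (intervalIntegral.integral_add_adjacent_intervals
      (continuous_stdPhi.intervalIntegrable c a)
      (continuous_stdPhi.intervalIntegrable a b)).symm
  -- (i): stdPhi a - stdPhi b ≥ a * M
  have hi : a * M ≤ stdPhi a - stdPhi b := by
    rw [← integral_id_mul_stdPhi a b]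
    have h0 : a * M = ∫ t in a..b, a * stdPhi t := by
      rw [hM, intervalIntegral.integral_const_mul]
    rw [h0]
    apply intervalIntegral.integral_mono_on hab.le
      ((cont_const_mul_stdPhi a).intervalIntegrable a b)
      (cont_id_mul_stdPhi.intervalIntegrable a b)
    intro t ht
    exact mul_le_mul_of_nonneg_right ht.1 (stdPhi_pos t).le
  -- (ii): a * N - (stdPhi c - stdPhi a) > 0
  have hii : 0 < a * N - (stdPhi c - stdPhi a) := by
    have h1 : (∫ t in c..a, (a - t) * stdPhi t) = a * N - (stdPhi c - stdPhi a) := by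
      have h2 : ∀ t : ℝ, (a - t) * stdPhi t = a * stdPhi t - t * stdPhi t := by
        intro t; ring
      simp_rw [h2]
      rw [intervalIntegral.integral_sub ((cont_const_mul_stdPhi a).intervalIntegrable c a)
        (cont_id_mul_stdPhi.intervalIntegrable c a),
        intervalIntegral.integral_const_mul, integral_id_mul_stdPhi]
    rw [← h1]
    exact intervalIntegral.intervalIntegral_pos_of_pos_on
      ((cont_sub_mul_stdPhi a).intervalIntegrable c a)
      (fun t ht => mul_pos (by linarith [ht.2]) (stdPhi_pos t)) hca
  have hcalc : (stdPhi a - stdPhi c) * (N + M) - N * (stdPhi b - stdPhi c)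
      = M * ((stdPhi a - stdPhi c) + a * N) + N * ((stdPhi a - stdPhi b) - a * M) := by ring
  rw [hD, hcalc]
  have h1 : 0 ≤ N * ((stdPhi a - stdPhi b) - a * M) :=
    mul_nonneg hNpos.le (by linarith)
  have h2 : 0 < M * ((stdPhi a - stdPhi c) + a * N) :=
    mul_pos hMpos (by linarith)
  linarith

lemma hasDerivAt_comp_cdf (σ w θ : ℝ) (hσ : σ ≠ 0) :
    HasDerivAt (fun θ : ℝ => stdNormalCDF ((w - θ) / σ))
      (-(1 / σ) * stdPhi ((w - θ) / σ)) θ := by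
  have h1 : HasDerivAt (fun θ : ℝ => (w - θ) / σ) (-(1 / σ)) θ := by
    have := ((hasDerivAt_id θ).const_sub w).div_const σ
    simpa [neg_div] using this
  have := (hasDerivAt_stdNormalCDF ((w - θ) / σ)).comp θ h1
  convert this using 1
  · rfl
  · rfl
  · rfl
  ring

/-- for fixed `σ > 0`, `u < v` and `x ∈ (u, v)`, the map
`θ ↦ F^{u,v}_{θ,σ²}(x)` is strictly decreasing; consequently, for any `α ∈ (0,1)` each of the
equations `F^{u,v}_{θ,σ²}(x) = 1 − α/2` and `F^{u,v}_{θ,σ²}(x) = α/2` has at most one solution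
in `θ`. -/
theorem statement11 (σ u v x : ℝ) (hσ : 0 < σ) (huv : u < v) (hx : x ∈ Set.Ioo u v) :
    StrictAnti (fun θ : ℝ => truncGaussCDF θ σ u v x) ∧
    ∀ α : ℝ, 0 < α → α < 1 →
      (∀ θ₁ θ₂ : ℝ, truncGaussCDF θ₁ σ u v x = 1 - α / 2 →
        truncGaussCDF θ₂ σ u v x = 1 - α / 2 → θ₁ = θ₂) ∧
      (∀ θ₁ θ₂ : ℝ, truncGaussCDF θ₁ σ u v x = α / 2 →
        truncGaussCDF θ₂ σ u v x = α / 2 → θ₁ = θ₂) := by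
  have hσ' : σ ≠ 0 := ne_of_gt hσ
  have hDpos : ∀ θ : ℝ, 0 < stdNormalCDF ((v - θ) / σ) - stdNormalCDF ((u - θ) / σ) := by
    intro θ
    rw [stdNormalCDF_sub]
    exact integral_stdPhi_pos ((div_lt_div_iff_of_pos_right hσ).2 (by linarith))
  have hanti : StrictAnti (fun θ : ℝ => truncGaussCDF θ σ u v x) := by
    refine strictAnti_of_hasDerivAt_neg (f' := fun θ =>
      ((-(1 / σ) * stdPhi ((x - θ) / σ) - -(1 / σ) * stdPhi ((u - θ) / σ)) *
          (stdNormalCDF ((v - θ) / σ) - stdNormalCDF ((u - θ) / σ)) -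
        (stdNormalCDF ((x - θ) / σ) - stdNormalCDF ((u - θ) / σ)) *
          (-(1 / σ) * stdPhi ((v - θ) / σ) - -(1 / σ) * stdPhi ((u - θ) / σ))) /
        (stdNormalCDF ((v - θ) / σ) - stdNormalCDF ((u - θ) / σ)) ^ 2)
      (fun θ => ?_) (fun θ => ?_)
    · exact HasDerivAt.div
        ((hasDerivAt_comp_cdf σ x θ hσ').sub (hasDerivAt_comp_cdf σ u θ hσ'))
        ((hasDerivAt_comp_cdf σ v θ hσ').sub (hasDerivAt_comp_cdf σ u θ hσ'))
        (ne_of_gt (hDpos θ))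
    · have hca : (u - θ) / σ < (x - θ) / σ :=
        (div_lt_div_iff_of_pos_right hσ).2 (by linarith [hx.1])
      have hab : (x - θ) / σ < (v - θ) / σ :=
        (div_lt_div_iff_of_pos_right hσ).2 (by linarith [hx.2])
      have hKey := key_pos hca hab
      rw [← stdNormalCDF_sub, ← stdNormalCDF_sub] at hKey
      apply div_neg_of_neg_of_pos _ (pow_pos (hDpos θ) 2)
      have h1σ : 0 < 1 / σ := by positivity
      nlinarith [mul_pos h1σ hKey]
  refine ⟨hanti, fun α _ _ => ⟨fun θ₁ θ₂ h1 h2 => hanti.injective (h1.trans h2.symm),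
    fun θ₁ θ₂ h1 h2 => hanti.injective (h1.trans h2.symm)⟩⟩
end
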